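/- The expected Fisher information matrix I(θ) of the rank-one PCP model, a square matrix of order Σ_{p=1}^P N_p, is singular and has rank exactly r = (Σ_{p=1}^P N_p) − P + 1; equivalently, its null space has dimension P − 1. -/

import Mathlib

open Finset

noncomputable section

variable {P : ℕ} {N : Fin P → ℕ}

/-- Factor sum `λ_p = Σ_j a_p(j)`. -/
def lam1 (a : (p : Fin P) → Fin (N p) → ℝ) (p : Fin P) : ℝ :=
  ∑ j, a p j

/-- Index set of the parameter vector `θ`: a pair of a mode `p` and a coordinate of
`a_p`; its cardinality is `Σ_p N_p`. -/
abbrev FullIdx (N : Fin P → ℕ) := (p : Fin P) × Fin (N p)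

/-- **Expected Fisher information matrix of the rank-one PCP model**: the symmetric
`(Σ_p N_p) × (Σ_p N_p)` block matrix whose `(p,p)` diagonal block has `(i,j)` entry
`[i = j] · λ/(λ_p a_p(i))` and whose `(p,q)` off-diagonal block (`p ≠ q`) has every
entry equal to `λ/(λ_p λ_q)`, where `λ = λ_1 ⋯ λ_P`. -/
def fim (a : (p : Fin P) → Fin (N p) → ℝ) : Matrix (FullIdx N) (FullIdx N) ℝ :=
  fun x y =>
    if x = y then (∏ p, lam1 a p) / (lam1 a x.1 * a x.1 x.2)
    else if x.1 = y.1 then 0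
    else (∏ p, lam1 a p) / (lam1 a x.1 * lam1 a y.1)

/-- Retained indices: all coordinates of `a_1`, and all but the first coordinate of
each `a_p` for `p ∈ {2,…,P}`. -/
abbrev RetIdx (N : Fin P → ℕ) := {x : FullIdx N // (x.1 : ℕ) = 0 ∨ (x.2 : ℕ) ≠ 0}

/-- Deleted indices: the first coordinate of each `a_p` for `p ∈ {2,…,P}`. -/
abbrev DelIdx (N : Fin P → ℕ) := {x : FullIdx N // ¬((x.1 : ℕ) = 0 ∨ (x.2 : ℕ) ≠ 0)}

/-- `I_F`: the principal submatrix of `I(θ)` on the retained indices. -/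
def fimF (a : (p : Fin P) → Fin (N p) → ℝ) : Matrix (RetIdx N) (RetIdx N) ℝ :=
  fun x y => fim a x.1 y.1

/-- `I_{F,N}`: the deleted rows of `I(θ)` restricted to the retained columns. -/
def fimFN (a : (p : Fin P) → Fin (N p) → ℝ) : Matrix (DelIdx N) (RetIdx N) ℝ :=
  fun x y => fim a x.1 y.1

/-- `I_N`: the principal submatrix of `I(θ)` on the deleted indices. -/
def fimN (a : (p : Fin P) → Fin (N p) → ℝ) : Matrix (DelIdx N) (DelIdx N) ℝ :=
  fun x y => fim a x.1 y.1

/-!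
Write `Λ = ∏_q λ_q` and, for a vector `v` indexed like `θ`, `s_q = (Σ_j v(q,j)) / λ_q`.
Every entry of `I(θ)` in row `(p,i)` carries the factor `Λ / λ_p`, and what remains splits as
`diag(1/a) - blockdiag(1/λ) + 𝟙 ⊗ (1/λ)`, so
`(I(θ) v)(p,i) = Λ / λ_p · (v(p,i) / a_p(i) - s_p + Σ_q s_q)`.
If this vanishes then `v(p,i) = a_p(i) (s_p - Σ_q s_q)`; summing over `i` forces `Σ_q s_q = 0`.
Hence the null space is exactly `{(c_p a_p(i))_{p,i} : Σ_p c_p = 0}`, the injective image of a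
hyperplane of `ℝ^P`, of dimension `P - 1`; rank–nullity gives the rank.
-/

section BlockScale

variable {K : Type*} [Field K] {κ : Type*} {ι : κ → Type*}

def blockScale (a : (k : κ) → ι k → K) : (κ → K) →ₗ[K] ((k : κ) × ι k → K) where
  toFun c x := c x.1 * a x.1 x.2
  map_add' c d := by ext x; exact add_mul _ _ _
  map_smul' r c := by ext x; exact mul_assoc _ _ _

@[simp]
theorem blockScale_apply (a : (k : κ) → ι k → K) (c : κ → K) (x : (k : κ) × ι k) :
    blockScale a c x = c x.1 * a x.1 x.2 :=
  rfl

theorem blockScale_injective {a : (k : κ) → ι k → K} (ha : ∀ k, ∃ i, a k i ≠ 0) :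
    Function.Injective (blockScale a) := by
  intro c d hcd
  funext k
  obtain ⟨i, hi⟩ := ha k
  exact mul_right_cancel₀ hi (congrFun hcd ⟨k, i⟩)

end BlockScale

section CoordSum

variable (K : Type*) [Field K] (ι : Type*) [Fintype ι]

def coordSum : Module.Dual K (ι → K) :=
  ∑ i, LinearMap.proj i

variable {K ι}

@[simp]
theorem coordSum_apply (c : ι → K) : coordSum K ι c = ∑ i, c i := by
  simp [coordSum]

theorem finrank_ker_coordSum [Nonempty ι] :
    Module.finrank K (LinearMap.ker (coordSum K ι)) = Fintype.card ι - 1 := by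
  classical
  have hne : coordSum K ι ≠ 0 := fun h => by
    simpa using LinearMap.congr_fun h (Pi.single (Classical.arbitrary ι) 1)
  have := Module.Dual.finrank_ker_add_one_of_ne_zero hne
  rw [Module.finrank_fintype_fun_eq_card] at this
  omega

end CoordSum

namespace Matrix

variable {m n K : Type*} [Fintype n] [Field K]

theorem rank_add_finrank_ker_mulVecLin (A : Matrix m n K) :
    A.rank + Module.finrank K (LinearMap.ker A.mulVecLin) = Fintype.card n := by
  rw [rank, LinearMap.finrank_range_add_finrank_ker, Module.finrank_fintype_fun_eq_card]

theorem det_eq_zero_of_finrank_ker_pos [DecidableEq n] {A : Matrix n n K}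
    (h : 0 < Module.finrank K (LinearMap.ker A.mulVecLin)) : A.det = 0 := by
  have hker : LinearMap.ker A.mulVecLin ≠ ⊥ := by
    rw [Ne, ← Submodule.finrank_eq_zero]
    omega
  rw [Ne, ker_mulVecLin_eq_bot_iff] at hker
  push Not at hker
  obtain ⟨v, hv, hv0⟩ := hker
  exact exists_mulVec_eq_zero_iff.mp ⟨v, hv0, hv⟩

end Matrix

section FisherInformation

variable {P : ℕ} {N : Fin P → ℕ}

open scoped Matrix

theorem lam1_pos (hN : ∀ p, 1 ≤ N p) {a : (p : Fin P) → Fin (N p) → ℝ}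
    (ha : ∀ p j, 0 < a p j) (p : Fin P) : 0 < lam1 a p :=
  Finset.sum_pos (fun j _ => ha p j) ⟨⟨0, hN p⟩, Finset.mem_univ _⟩

def blockRatio (a : (p : Fin P) → Fin (N p) → ℝ) (v : FullIdx N → ℝ) (q : Fin P) : ℝ :=
  (∑ j, v ⟨q, j⟩) / lam1 a q

theorem fim_apply (a : (p : Fin P) → Fin (N p) → ℝ) (x y : FullIdx N) :
    fim a x y = (∏ q, lam1 a q) / lam1 a x.1 *
      ((if x = y then (a x.1 x.2)⁻¹ else 0) - (if x.1 = y.1 then (lam1 a y.1)⁻¹ else 0) +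
        (lam1 a y.1)⁻¹) := by
  unfold fim
  by_cases hxy : x = y
  · subst hxy
    simp only [if_true]
    ring
  · by_cases hp : x.1 = y.1 <;> simp only [hxy, hp, if_true, if_false] <;> ring

theorem fim_mulVec_apply (a : (p : Fin P) → Fin (N p) → ℝ) (v : FullIdx N → ℝ) (p : Fin P)
    (i : Fin (N p)) :
    (fim a *ᵥ v) ⟨p, i⟩ = (∏ q, lam1 a q) / lam1 a p *
      (v ⟨p, i⟩ / a p i - blockRatio a v p + ∑ q, blockRatio a v q) := by
  rw [Matrix.mulVec, dotProduct]
  simp_rw [fim_apply, mul_assoc, ← Finset.mul_sum]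
  congr 1
  simp only [add_mul, sub_mul, ite_mul, zero_mul, Finset.sum_add_distrib, Finset.sum_sub_distrib,
    Finset.sum_ite_eq, Finset.mem_univ, if_true, Fintype.sum_sigma]
  simp [blockRatio, Finset.sum_ite_irrel, ← Finset.mul_sum, div_eq_inv_mul]

theorem blockRatio_blockScale {a : (p : Fin P) → Fin (N p) → ℝ} (hlam : ∀ p, lam1 a p ≠ 0)
    (c : Fin P → ℝ) (q : Fin P) : blockRatio a (blockScale a c) q = c q := by
  simp only [blockRatio, blockScale_apply, ← Finset.mul_sum]
  exact mul_div_cancel_right₀ _ (hlam q)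

theorem ker_fim_mulVecLin {a : (p : Fin P) → Fin (N p) → ℝ} (hlam : ∀ p, lam1 a p ≠ 0)
    (ha : ∀ p j, a p j ≠ 0) :
    LinearMap.ker (fim a).mulVecLin =
      (LinearMap.ker (coordSum ℝ (Fin P))).map (blockScale a) := by
  have hΛ : ∏ q, lam1 a q ≠ 0 := Finset.prod_ne_zero_iff.2 fun q _ => hlam q
  ext v
  simp only [LinearMap.mem_ker, Submodule.mem_map, Matrix.mulVecLin_apply, coordSum_apply]
  constructor
  · intro hv
    set s := blockRatio a v
    have hv_eq : ∀ p i, v ⟨p, i⟩ = (s p - ∑ q, s q) * a p i := by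
      intro p i
      have h := congrFun hv ⟨p, i⟩
      rw [fim_mulVec_apply, Pi.zero_apply, mul_eq_zero] at h
      have h' := h.resolve_left (div_ne_zero hΛ (hlam p))
      rw [← div_eq_iff (ha p i)]
      linarith
    have hS : ∑ q, s q = 0 := by
      rcases isEmpty_or_nonempty (Fin P) with hP | ⟨⟨p⟩⟩
      · simp
      · have : s p = s p - ∑ q, s q :=
          calc s p = (∑ j, v ⟨p, j⟩) / lam1 a p := rfl
            _ = (s p - ∑ q, s q) * lam1 a p / lam1 a p := by
              rw [Finset.sum_congr rfl fun j _ => hv_eq p j, ← Finset.mul_sum]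
              rfl
            _ = s p - ∑ q, s q := mul_div_cancel_right₀ _ (hlam p)
        linarith
    refine ⟨s, hS, funext fun x => ?_⟩
    rw [blockScale_apply, hv_eq, hS, sub_zero]
  · rintro ⟨c, hc, rfl⟩
    funext ⟨p, i⟩
    simp [fim_mulVec_apply, blockRatio_blockScale hlam, hc, ha p i]

theorem finrank_ker_fim_mulVecLin [NeZero P] (hN : ∀ p, 1 ≤ N p)
    {a : (p : Fin P) → Fin (N p) → ℝ} (ha : ∀ p j, 0 < a p j) :
    Module.finrank ℝ (LinearMap.ker (fim a).mulVecLin) = P - 1 := by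
  have hinj := blockScale_injective (a := a) fun p => ⟨⟨0, hN p⟩, (ha p _).ne'⟩
  rw [ker_fim_mulVecLin (fun p => (lam1_pos hN ha p).ne') (fun p j => (ha p j).ne'),
    ← (Submodule.equivMapOfInjective _ hinj _).finrank_eq, finrank_ker_coordSum, Fintype.card_fin]

end FisherInformation

/-- **Rank of the expected Fisher information matrix.** The expected Fisher
information `I(θ)` of the rank-one PCP model, a square matrix of order `Σ_p N_p`, is
singular (zero determinant) with rank exactly `r = (Σ_p N_p) − P + 1`; equivalently,
its null space has dimension `P − 1`. -/
theorem stmt_18 (P : ℕ) (hP : 2 ≤ P) (N : Fin P → ℕ) (hN : ∀ p, 1 ≤ N p)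
    (a : (p : Fin P) → Fin (N p) → ℝ) (ha : ∀ p j, 0 < a p j) :
    (fim a).det = 0 ∧
    (fim a).rank = (∑ p, N p) - P + 1 ∧
    Module.finrank ℝ (LinearMap.ker (fim a).mulVecLin) = P - 1 := by
  have : NeZero P := ⟨by omega⟩
  have hker := finrank_ker_fim_mulVecLin hN ha
  have hrank := (fim a).rank_add_finrank_ker_mulVecLin
  have hcard : Fintype.card (FullIdx N) = ∑ p, N p := by simp
  have hPN : P ≤ ∑ p, N p := by
    simpa using Finset.sum_le_sum fun p (_ : p ∈ Finset.univ) => hN p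
  rw [hker, hcard] at hrank
  exact ⟨Matrix.det_eq_zero_of_finrank_ker_pos (by omega), by omega, hker⟩
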